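/- Suppose k, n, m are positive integers with k ≥ 150, n − m ≥ 2, a1, a2 ∈ {1,…,9}, and Q_k = a1·(10^n−1)/9 − a2·(10^m−1)/9. Then n − m < 34. -/

import Mathlib

/-! Clearing denominators, the equation reads `9 Q_k + a₂ 10^m + a₁ = a₁ 10^n + a₂`, and it has
no solution at all once `n ≥ 6`. Modulo any `M`, `Q_k` is periodic in `k` and `10^n` is eventually
periodic in `n`, so reducing the equation modulo `M` leaves finitely many residue classes to
inspect. For `m ≥ 3` the modulus `200` (which then divides `10^m` and `10^n`) already rules out
every pair of digits; for `m ∈ {1, 2}` one of four moduli does. -/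

/-- The Pell-Lucas sequence: `Q 0 = Q 1 = 2`, `Q (n+2) = 2 * Q (n+1) + Q n`. -/
def pellLucas : ℕ → ℕ
  | 0 => 2
  | 1 => 2
  | n + 2 => 2 * pellLucas (n + 1) + pellLucas n

theorem nine_mul_repunit (n : ℕ) : 9 * (((10 : ℤ) ^ n - 1) / 9) = 10 ^ n - 1 :=
  Int.mul_ediv_cancel' (by simpa using sub_one_dvd_pow_sub_one (10 : ℤ) n)

theorem nine_mul_pellLucas_add_eq {k n m a₁ a₂ : ℕ}
    (h : (pellLucas k : ℤ) = a₁ * ((10 ^ n - 1) / 9) - a₂ * ((10 ^ m - 1) / 9)) :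
    9 * pellLucas k + a₂ * 10 ^ m + a₁ = a₁ * 10 ^ n + a₂ := by
  zify
  linear_combination 9 * h + a₁ * nine_mul_repunit n - a₂ * nine_mul_repunit m

theorem pellLucas_mod_periodic {M T : ℕ} (h₀ : pellLucas T ≡ 2 [MOD M])
    (h₁ : pellLucas (T + 1) ≡ 2 [MOD M]) : Function.Periodic (fun k ↦ pellLucas k % M) T := by
  suffices h : ∀ k, pellLucas (T + k) ≡ pellLucas k [MOD M] ∧
      pellLucas (T + k + 1) ≡ pellLucas (k + 1) [MOD M] from
    fun k ↦ by rw [add_comm]; exact (h k).1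
  intro k
  induction k with
  | zero => exact ⟨h₀, h₁⟩
  | succ k ih => exact ⟨ih.2, (ih.2.mul_left 2).add ih.1⟩

theorem exists_lt_pow_modEq_pow_add {b M N o n : ℕ} (ho : 0 < o)
    (h : b ^ (N + o) ≡ b ^ N [MOD M]) (hn : N ≤ n) :
    ∃ e < o, b ^ n ≡ b ^ (N + e) [MOD M] := by
  have hper : Function.Periodic (fun j ↦ b ^ (N + j) % M) o := fun j ↦ by
    dsimp only
    rw [← add_assoc, add_right_comm, pow_add b (N + o) j, pow_add b N j]
    exact h.mul_right _
  refine ⟨(n - N) % o, Nat.mod_lt _ ho, ?_⟩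
  have h := (hper.map_mod_nat (n - N)).symm
  rwa [Nat.add_sub_cancel' hn] at h

/-- A certificate, checkable by evaluation, that `9 Q_k + a₂ 10^m + a₁ = a₁ 10^n + a₂` has no
solution with `N ≤ n` and `10^m ≡ c [MOD M]`: `T` is a period of `Q` modulo `M`, `o` one of `10^n`
modulo `M` from `n = N` on, and no pair of residues satisfies the equation modulo `M`. -/
def DigitObstruction (M T N o c a₁ a₂ : ℕ) : Prop :=
  0 < T ∧ pellLucas T ≡ 2 [MOD M] ∧ pellLucas (T + 1) ≡ 2 [MOD M] ∧
    0 < o ∧ 10 ^ (N + o) ≡ 10 ^ N [MOD M] ∧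
    ∀ r < T, ∀ e < o, ¬ 9 * pellLucas r + a₂ * c + a₁ ≡ a₁ * 10 ^ (N + e) + a₂ [MOD M]

instance (M T N o c a₁ a₂ : ℕ) : Decidable (DigitObstruction M T N o c a₁ a₂) := by
  unfold DigitObstruction; infer_instance

theorem DigitObstruction.ne {M T N o c a₁ a₂ k m n : ℕ} (hobs : DigitObstruction M T N o c a₁ a₂)
    (hn : N ≤ n) (hc : 10 ^ m ≡ c [MOD M]) :
    9 * pellLucas k + a₂ * 10 ^ m + a₁ ≠ a₁ * 10 ^ n + a₂ := by
  obtain ⟨hT, h₀, h₁, ho, hpow, hres⟩ := hobs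
  obtain ⟨e, he, hne⟩ := exists_lt_pow_modEq_pow_add ho hpow hn
  have hk : pellLucas (k % T) ≡ pellLucas k [MOD M] :=
    (pellLucas_mod_periodic h₀ h₁).map_mod_nat k
  intro h
  refine hres (k % T) (Nat.mod_lt _ hT) e he ?_
  calc 9 * pellLucas (k % T) + a₂ * c + a₁
      ≡ 9 * pellLucas k + a₂ * 10 ^ m + a₁ [MOD M] :=
        ((hk.mul_left 9).add (hc.symm.mul_left a₂)).add_right a₁
    _ = a₁ * 10 ^ n + a₂ := h
    _ ≡ a₁ * 10 ^ (N + e) + a₂ [MOD M] := (hne.mul_left a₁).add_right a₂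

theorem digitObstruction_two_hundred :
    ∀ a₁ ∈ Finset.Icc 1 9, ∀ a₂ ∈ Finset.Icc 1 9, DigitObstruction 200 60 3 1 0 a₁ a₂ := by
  decide +kernel

-- Moduli found by a computer search: `1760 = 2⁵·5·11` and `90176 = 2⁶·1409`, and `10` has
-- order `2`, `7`, `32` modulo `11`, `239`, `1409`.
theorem digitObstruction_of_mem_Icc_one_two :
    ∀ m ∈ Finset.Icc 1 2, ∀ a₁ ∈ Finset.Icc 1 9, ∀ a₂ ∈ Finset.Icc 1 9,
      DigitObstruction 16 4 4 1 (10 ^ m) a₁ a₂ ∨ DigitObstruction 1760 24 5 2 (10 ^ m) a₁ a₂ ∨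
        DigitObstruction 239 14 0 7 (10 ^ m) a₁ a₂ ∨
        DigitObstruction 90176 128 6 32 (10 ^ m) a₁ a₂ := by
  decide +kernel

theorem nine_mul_pellLucas_add_ne {k m n a₁ a₂ : ℕ} (hm : 1 ≤ m) (hn : 6 ≤ n)
    (ha₁ : a₁ ∈ Finset.Icc 1 9) (ha₂ : a₂ ∈ Finset.Icc 1 9) :
    9 * pellLucas k + a₂ * 10 ^ m + a₁ ≠ a₁ * 10 ^ n + a₂ := by
  obtain hm₂ | hm₃ := lt_or_ge m 3
  · have hm' : m ∈ Finset.Icc 1 2 := Finset.mem_Icc.2 ⟨hm, by omega⟩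
    rcases digitObstruction_of_mem_Icc_one_two m hm' a₁ ha₁ a₂ ha₂ with h | h | h | h <;>
      exact h.ne (by omega) rfl
  · have hc : 10 ^ m ≡ 0 [MOD 200] :=
      Nat.modEq_zero_iff_dvd.2 ((by norm_num : 200 ∣ 10 ^ 3).trans (pow_dvd_pow 10 hm₃))
    exact (digitObstruction_two_hundred a₁ ha₁ a₂ ha₂).ne (by omega) hc

theorem pellLucas_n_sub_m_bound_general (k n m a1 a2 : ℕ) (hm : 1 ≤ m)
    (ha11 : 1 ≤ a1) (ha19 : a1 ≤ 9) (ha21 : 1 ≤ a2) (ha29 : a2 ≤ 9)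
    (heq : (pellLucas k : ℤ) = (a1 : ℤ) * ((10 ^ n - 1) / 9) - (a2 : ℤ) * ((10 ^ m - 1) / 9)) :
    n - m < 34 := by
  by_contra! h
  exact nine_mul_pellLucas_add_ne hm (by omega) (Finset.mem_Icc.2 ⟨ha11, ha19⟩)
    (Finset.mem_Icc.2 ⟨ha21, ha29⟩) (nine_mul_pellLucas_add_eq heq)

/-- Under the hypotheses of the Pell-Lucas equation, `n - m < 34`. -/
theorem pellLucas_n_sub_m_bound (k n m a1 a2 : ℕ) (hk : 150 ≤ k) (hnm : m + 2 ≤ n) (hm : 1 ≤ m)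
    (ha11 : 1 ≤ a1) (ha19 : a1 ≤ 9) (ha21 : 1 ≤ a2) (ha29 : a2 ≤ 9)
    (heq : (pellLucas k : ℤ) = (a1 : ℤ) * ((10 ^ n - 1) / 9) - (a2 : ℤ) * ((10 ^ m - 1) / 9)) :
    n - m < 34 :=
  pellLucas_n_sub_m_bound_general k n m a1 a2 hm ha11 ha19 ha21 ha29 heq
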